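/- arXiv:1903.09960 — 2 statements merged into one kernel-verified Lean document; each statement's English description precedes it below -/
import Mathlib

section
/- If N and N' are both infinitely generic structures in the multiverse and N' ≤ N (N' extends N), then N is an elementary substructure of N': for every sentence φ with parameters in N, N ⊨ φ iff N' ⊨ φ. -/
namespace Robinson

/-- Formulas built from atoms (which may carry parameters), with conjunction,
disjunction, negation and an existential quantifier whose witnesses range over
a fixed type `W` of potential parameters/elements. -/
inductive Frm (atom : Type) (W : Type) : Type
  | atm : atom → Frm atom W
  | and : Frm atom W → Frm atom W → Frm atom W
  | or  : Frm atom W → Frm atom W → Frm atom W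
  | not : Frm atom W → Frm atom W
  | ex  : (W → Frm atom W) → Frm atom W

/-- A multiverse: a preorder of structures, `le Q N` meaning `Q` extends `N`
(`N` is a substructure of `Q`).  `mem a N` says the element `a` belongs to the
domain of `N` (so elements persist to extensions), and atomic sentences with
parameters in `N` are absolute between `N` and its extensions. -/
structure Multiverse (atom : Type) (W : Type) : Type 1 where
  M : Type
  le : M → M → Prop
  le_refl : ∀ N, le N N
  le_trans : ∀ {P Q R}, le P Q → le Q R → le P R
  satAtom : M → atom → Prop
  mem : W → M → Prop
  mem_mono : ∀ {a : W} {N Q : M}, le Q N → mem a N → mem a Q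
  atom_absolute : ∀ {N Q : M} (p : atom), le Q N → (satAtom N p ↔ satAtom Q p)

variable {atom W : Type}

/-- Robinson's infinite forcing relation on the multiverse. -/
def Forces (V : Multiverse atom W) : Frm atom W → V.M → Prop
  | .atm p, N => V.satAtom N p
  | .and φ ψ, N => Forces V φ N ∧ Forces V ψ N
  | .or φ ψ, N => Forces V φ N ∨ Forces V ψ N
  | .not φ, N => ∀ Q : V.M, V.le Q N → ¬ Forces V φ Q
  | .ex f, N => ∃ a : W, V.mem a N ∧ Forces V (f a) N

/-- Tarskian satisfaction. -/
def Sat (V : Multiverse atom W) : Frm atom W → V.M → Prop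
  | .atm p, N => V.satAtom N p
  | .and φ ψ, N => Sat V φ N ∧ Sat V ψ N
  | .or φ ψ, N => Sat V φ N ∨ Sat V ψ N
  | .not φ, N => ¬ Sat V φ N
  | .ex f, N => ∃ a : W, V.mem a N ∧ Sat V (f a) N

/-- `N` is infinitely generic: it forces every sentence or its negation. -/
def Generic (V : Multiverse atom W) (N : V.M) : Prop :=
  ∀ φ : Frm atom W, Forces V φ N ∨ Forces V (Frm.not φ) N

end Robinson


namespace Robinson

/-!
A generic structure `N` forces `φ` or `¬φ`. In an extension `N'` of `N` forcing persists, and `¬φ`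
and `φ` cannot both be forced, so `N` and `N'` force the same sentences. For generic structures
forcing is satisfaction, hence `N` and `N'` satisfy the same sentences.
-/

section

variable {atom W : Type} {V : Multiverse atom W}

theorem forces_mono (φ : Frm atom W) {N Q : V.M} (hle : V.le Q N) (h : Forces V φ N) :
    Forces V φ Q := by
  induction φ generalizing N Q with
  | atm p => exact (V.atom_absolute p hle).mp h
  | and φ ψ ihφ ihψ => exact ⟨ihφ hle h.1, ihψ hle h.2⟩
  | or φ ψ ihφ ihψ => exact h.imp (ihφ hle) (ihψ hle)
  | not φ _ => exact fun R hR => h R (V.le_trans hR hle)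
  | ex f ih =>
    obtain ⟨a, ha, hfa⟩ := h
    exact ⟨a, V.mem_mono hle ha, ih a hle hfa⟩

theorem not_forces_of_forces_not {φ : Frm atom W} {N : V.M} (h : Forces V (.not φ) N) :
    ¬ Forces V φ N :=
  h N (V.le_refl N)

theorem Generic.forces_iff_sat {N : V.M} (hN : Generic V N) (φ : Frm atom W) :
    Forces V φ N ↔ Sat V φ N := by
  induction φ with
  | atm p => exact Iff.rfl
  | and φ ψ ihφ ihψ => exact and_congr ihφ ihψ
  | or φ ψ ihφ ihψ => exact or_congr ihφ ihψ
  | not φ ih =>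
    refine ⟨fun h hs => not_forces_of_forces_not h (ih.mpr hs), fun hs => ?_⟩
    exact (hN φ).resolve_left (mt ih.mp hs)
  | ex f ih => exact exists_congr fun a => and_congr Iff.rfl (ih a)

theorem Generic.forces_iff_of_le {N Q : V.M} (hN : Generic V N) (hle : V.le Q N)
    (φ : Frm atom W) : Forces V φ N ↔ Forces V φ Q := by
  refine ⟨forces_mono φ hle, fun hQ => (hN φ).resolve_right fun hnot => ?_⟩
  exact not_forces_of_forces_not (forces_mono _ hle hnot) hQ

end

/-- If N and N' are both infinitely generic and N' extends N, then N is an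
elementary substructure of N'. -/
theorem generic_elementary {atom W : Type} (V : Multiverse atom W) {N N' : V.M}
    (hN : Generic V N) (hN' : Generic V N') (hle : V.le N' N) :
    ∀ phi : Frm atom W, Sat V phi N ↔ Sat V phi N' := fun phi => by
  rw [← hN.forces_iff_sat, ← hN'.forces_iff_sat]
  exact hN.forces_iff_of_le hle phi
end Robinson
end

section
/- Let M be a countable transitive model of ZFC (viewed abstractly as a countable dense-in-itself forcing setting) and let ⟨cₙ : n ∈ ω⟩ be finitely mutually M-generic Cohen reals, giving a tower M ⊆ M[c₀] ⊆ M[c₀][c₁] ⊆ …. Then there is a single M-generic Cohen real d such that each cₙ ∈ M[d]; hence M[c₀]…[cₙ] ⊆ M[d] for all n. -/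
namespace CohenTower

/-- A condition of the forcing `Add(ω,ω)`: a finite partial function from `ω × ω`
(slice index, coordinate) to `2`. -/
def Cond : Type := {p : ℕ × ℕ → Option Bool // {x | p x ≠ none}.Finite}

/-- `Extends q p`: the condition `q` extends the condition `p`. -/
def Extends (q p : Cond) : Prop :=
  ∀ x b, p.1 x = some b → q.1 x = some b

/-- Density of `D` within a subcollection `S` of conditions. -/
def DenseIn (S : Set Cond) (D : Set Cond) : Prop :=
  ∀ p ∈ S, ∃ q ∈ D ∩ S, Extends q p

/-- A total real `d : ω × ω → 2` satisfies a condition `p`. -/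
def Agrees (d : ℕ × ℕ → Bool) (p : Cond) : Prop :=
  ∀ x b, p.1 x = some b → d x = b

/-- The condition is supported on the first `n` slices. -/
def SuppLt (p : Cond) (n : ℕ) : Prop :=
  ∀ x, p.1 x ≠ none → x.1 < n

/-- The subposet of conditions supported on the first `n` slices, i.e. the product
forcing adding `n` Cohen reals. -/
def Pn (n : ℕ) : Set Cond := {p | SuppLt p n}

/-- Flipping a condition along a mask `e` (a definable operation). -/
def flipC (e : ℕ × ℕ → Bool) (p : Cond) : Cond :=
  ⟨fun x => (p.1 x).map fun b => xor (e x) b, by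
    apply p.2.subset
    intro x hx
    simp only [Set.mem_setOf_eq] at hx ⊢
    intro h
    simp [h] at hx⟩

/-- The dense subset of the product forcing on the first `n` slices derived (definably)
from a dense `D` and a condition `p₀` by the product-forcing projection lemma: the
conditions `r` supported on the first `n` slices that are either incompatible with `p₀`
or capture the first-`n`-slices part of some member of `D` extending `p₀`. -/
def derived (n : ℕ) (D : Set Cond) (p₀ : Cond) : Set Cond :=
  {r | SuppLt r n ∧
    ((¬ ∃ q : Cond, Extends q r ∧ Extends q p₀) ∨
      ∃ p ∈ D, Extends p p₀ ∧ ∀ x b, x.1 < n → p.1 x = some b → r.1 x = some b)}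

theorem extends_refl (p : Cond) : Extends p p := fun _ _ h => h
theorem extends_trans {p q r : Cond} (h1 : Extends r q) (h2 : Extends q p) : Extends r p :=
  fun x b hb => h1 x b (h2 x b hb)
theorem flipC_flipC (e : ℕ × ℕ → Bool) (p : Cond) : flipC e (flipC e p) = p := by
  apply Subtype.ext; funext x
  show ((p.1 x).map _).map _ = p.1 x
  cases h : p.1 x with
  | none => simp
  | some b => simp only [Option.map_some]; cases e x <;> cases b <;> rfl
theorem flipC_extends {e : ℕ × ℕ → Bool} {p q : Cond} (h : Extends q p) :
    Extends (flipC e q) (flipC e p) := by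
  intro x b hb
  cases hp : p.1 x with
  | none => simp [flipC, hp] at hb
  | some a =>
    have : q.1 x = some a := h x a hp
    simp only [flipC, hp, Option.map_some] at hb
    simp [flipC, this, hb]
theorem flipC_suppLt {e : ℕ × ℕ → Bool} {p : Cond} {n : ℕ} (h : SuppLt p n) :
    SuppLt (flipC e p) n := by
  intro x hx; apply h x; intro hnone; simp [flipC, hnone] at hx

-- merge of two conditions along a total real they both agree with
def mergeC (g : ℕ × ℕ → Bool) (p r : Cond) : Cond :=
  ⟨fun x => if p.1 x = none ∧ r.1 x = none then none else some (g x), by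
    apply (p.2.union r.2).subset
    intro x hx
    simp only [Set.mem_setOf_eq] at hx
    by_contra h
    simp only [Set.mem_union, Set.mem_setOf_eq, not_or, not_not] at h
    simp [h.1, h.2] at hx⟩

theorem mergeC_extends_left {g : ℕ × ℕ → Bool} {p r : Cond} (hp : Agrees g p) :
    Extends (mergeC g p r) p := by
  intro x b hb
  have h1 : ¬ (p.1 x = none ∧ r.1 x = none) := fun h => by simp [h.1] at hb
  show (if _ then _ else _) = _
  rw [if_neg h1, hp x b hb]

theorem mergeC_extends_right {g : ℕ × ℕ → Bool} {p r : Cond} (hr : Agrees g r) :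
    Extends (mergeC g p r) r := by
  intro x b hb
  have h1 : ¬ (p.1 x = none ∧ r.1 x = none) := fun h => by simp [h.2] at hb
  show (if _ then _ else _) = _
  rw [if_neg h1, hr x b hb]

-- restriction to the first n slices
def restrC (n : ℕ) (p : Cond) : Cond :=
  ⟨fun x => if x.1 < n then p.1 x else none, by
    apply p.2.subset
    intro x hx
    simp only [Set.mem_setOf_eq] at hx ⊢
    intro h; simp [h] at hx⟩

theorem derived_dense {n : ℕ} {D : Set Cond} (p₀ : Cond) (hD : DenseIn Set.univ D) :
    DenseIn (Pn n) (derived n D p₀) := by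
  intro s hs
  by_cases hcomp : ∃ q : Cond, Extends q s ∧ Extends q p₀
  · obtain ⟨q, hqs, hqp⟩ := hcomp
    obtain ⟨p, ⟨hpD, -⟩, hpq⟩ := hD q (Set.mem_univ q)
    refine ⟨restrC n p, ⟨⟨?_, Or.inr ⟨p, hpD, extends_trans hpq hqp, ?_⟩⟩, ?_⟩, ?_⟩
    · intro x hx
      by_contra h
      simp only [restrC, if_neg h] at hx
      exact hx rfl
    · intro x b hxn hb
      show (if _ then _ else _) = _
      rw [if_pos hxn, hb]
    · intro x hx
      by_contra h
      simp only [restrC, if_neg h] at hx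
      exact hx rfl
    · intro x b hb
      have hxn : x.1 < n := hs x (by simp [hb])
      have : p.1 x = some b := extends_trans hpq hqs x b hb
      show (if _ then _ else _) = _
      rw [if_pos hxn, this]
  · exact ⟨s, ⟨⟨hs, Or.inl hcomp⟩, hs⟩, extends_refl s⟩

theorem denseIn_flip {n : ℕ} {e : ℕ × ℕ → Bool} {S : Set Cond} (hS : DenseIn (Pn n) S) :
    DenseIn (Pn n) (flipC e ⁻¹' S) := by
  intro s hs
  obtain ⟨q, ⟨hqS, hqP⟩, hq⟩ := hS (flipC e s) (flipC_suppLt hs)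
  refine ⟨flipC e q, ⟨?_, flipC_suppLt hqP⟩, ?_⟩
  · show flipC e (flipC e q) ∈ S
    rw [flipC_flipC]; exact hqS
  · have := flipC_extends (e := e) hq
    rwa [flipC_flipC] at this


/-- The key step: given a condition `p` and a dense `D ∈ Msets`, there is `q ∈ D`
extending `p` whose newly decided bits on slices `< m` agree with `c`. -/
theorem step_exists (Msets : Set (Set Cond))
    (hflip : ∀ D ∈ Msets, ∀ e : ℕ × ℕ → Bool, {x | e x = true}.Finite →
      flipC e ⁻¹' D ∈ Msets)
    (hproj : ∀ D ∈ Msets, ∀ n : ℕ, ∀ p₀ : Cond, derived n D p₀ ∈ Msets)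
    (c : ℕ → ℕ → Bool)
    (hmut : ∀ n : ℕ, ∀ D ∈ Msets, DenseIn (Pn n) D →
      ∃ p ∈ D ∩ Pn n, Agrees (fun x => c x.1 x.2) p)
    (m : ℕ) (p : Cond) (D : Set Cond) (hD : D ∈ Msets) (hdense : DenseIn Set.univ D) :
    ∃ q, q ∈ D ∧ Extends q p ∧
      ∀ x b, x.1 < m → p.1 x = none → q.1 x = some b → b = c x.1 x.2 := by
  classical
  set c' : ℕ × ℕ → Bool := fun x => c x.1 x.2 with hc'
  set e : ℕ × ℕ → Bool := fun x => (p.1 x).elim false (fun b => xor b (c' x)) with he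
  have hefin : {x | e x = true}.Finite := by
    apply p.2.subset
    intro x hx
    simp only [Set.mem_setOf_eq] at hx ⊢
    intro hnone
    rw [he] at hx
    simp [hnone] at hx
  set c'' : ℕ × ℕ → Bool := fun x => xor (e x) (c' x) with hc''
  have hpc : Agrees c'' p := by
    intro x b hb
    simp only [hc'', he, hb, Option.elim]
    cases b <;> cases c' x <;> rfl
  have hSmem : derived m D p ∈ Msets := hproj D hD m p
  have hS'mem : flipC e ⁻¹' derived m D p ∈ Msets := hflip _ hSmem e hefin
  have hS'dense : DenseIn (Pn m) (flipC e ⁻¹' derived m D p) :=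
    denseIn_flip (derived_dense p hdense)
  obtain ⟨r', ⟨hr'S, hr'P⟩, hr'a⟩ := hmut m _ hS'mem hS'dense
  set r : Cond := flipC e r' with hr
  have hrS : r ∈ derived m D p := hr'S
  have hra : Agrees c'' r := by
    intro x b hb
    rcases hr'x : r'.1 x with _ | a
    · rw [hr] at hb; simp [flipC, hr'x] at hb
    · rw [hr] at hb
      simp only [flipC, hr'x, Option.map_some] at hb
      have hca := hr'a x a hr'x
      show (e x ^^ c' x) = b
      rw [hca]
      exact Option.some.inj hb
  have hcompat : ∃ q : Cond, Extends q r ∧ Extends q p :=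
    ⟨mergeC c'' p r, mergeC_extends_right hra, mergeC_extends_left hpc⟩
  rcases hrS.2 with hbad | ⟨p', hp'D, hp'p, hp'r⟩
  · exact absurd hcompat hbad
  · refine ⟨p', hp'D, hp'p, ?_⟩
    intro x b hxm hpx hp'x
    have hrx : r.1 x = some b := hp'r x b hxm hp'x
    have hcb : (e x ^^ c' x) = b := hra x b hrx
    have hex : e x = false := by rw [he]; simp [hpx]
    rw [hex] at hcb
    simp only [Bool.false_xor] at hcb
    exact hcb.symm

/-- The limit real determined by an increasing chain of conditions, defaulting to `c'`. -/
noncomputable def limitR (c' : ℕ × ℕ → Bool) (p : ℕ → Cond) (x : ℕ × ℕ) : Bool :=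
  open Classical in
  if ∃ m, (p m).1 x = some true then true
  else if ∃ m, (p m).1 x = some false then false
  else c' x

theorem limitR_agrees {c' : ℕ × ℕ → Bool} {p : ℕ → Cond}
    (hchain : ∀ m m', m ≤ m' → Extends (p m') (p m)) (m : ℕ) :
    Agrees (limitR c' p) (p m) := by
  classical
  intro x b hb
  cases b with
  | true =>
    have h1 : ∃ m', (p m').1 x = some true := ⟨m, hb⟩
    simp only [limitR]
    rw [if_pos h1]
  | false =>
    have h1 : ¬ ∃ m', (p m').1 x = some true := by
      rintro ⟨m', hm'⟩
      rcases le_total m m' with h | h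
      · have := hchain m m' h x false hb
        rw [hm'] at this; exact absurd (Option.some.inj this) (by simp)
      · have := hchain m' m h x true hm'
        rw [hb] at this; exact absurd (Option.some.inj this) (by simp)
    have h2 : ∃ m', (p m').1 x = some false := ⟨m, hb⟩
    simp only [limitR]
    rw [if_neg h1, if_pos h2]

theorem limitR_eq {c' : ℕ × ℕ → Bool} {p : ℕ → Cond} {x : ℕ × ℕ}
    (h : ∀ m b, (p m).1 x ≠ some b) : limitR c' p x = c' x := by
  classical
  have h1 : ¬ ∃ m, (p m).1 x = some true := by rintro ⟨m, hm⟩; exact h m true hm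
  have h2 : ¬ ∃ m, (p m).1 x = some false := by rintro ⟨m, hm⟩; exact h m false hm
  simp only [limitR]
  rw [if_neg h1, if_neg h2]


/-- **(Hamkins–Venturi.)** Let `M` be a countable transitive model of ZFC, abstracted
as a countable family `Msets` of sets of `Add(ω,ω)`-conditions closed under the
definable operations of flipping finitely many bits and of projecting to the first `n`
slices, and let `⟨cₙ : n ∈ ω⟩` be (finitely) mutually `M`-generic Cohen reals, giving
the tower `M ⊆ M[c₀] ⊆ M[c₀][c₁] ⊆ …` (mutual genericity: for each `n`, the combined
real `(i,k) ↦ cᵢ(k)` meets every set in `Msets` that is dense in the product forcing on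
the first `n` slices).  Then there is a single `M`-generic real `d` for `Add(ω,ω)`
such that each `cₙ` is a finite modification of the `n`-th slice of `d`; hence
`cₙ ∈ M[d]` and `M[c₀]…[cₙ] ⊆ M[d]` for every `n`. -/
theorem exists_generic_bound (Msets : Set (Set Cond))
    (hcount : Msets.Countable)
    (hflip : ∀ D ∈ Msets, ∀ e : ℕ × ℕ → Bool, {x | e x = true}.Finite →
      flipC e ⁻¹' D ∈ Msets)
    (hproj : ∀ D ∈ Msets, ∀ n : ℕ, ∀ p₀ : Cond, derived n D p₀ ∈ Msets)
    (c : ℕ → ℕ → Bool)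
    (hmut : ∀ n : ℕ, ∀ D ∈ Msets, DenseIn (Pn n) D →
      ∃ p ∈ D ∩ Pn n, Agrees (fun x => c x.1 x.2) p) :
    ∃ d : ℕ × ℕ → Bool,
      (∀ D ∈ Msets, DenseIn Set.univ D → ∃ p ∈ D, Agrees d p) ∧
      ∀ n : ℕ, {k | d (n, k) ≠ c n k}.Finite := by
  classical
  by_cases hne : {D | D ∈ Msets ∧ DenseIn Set.univ D}.Nonempty
  · have hsub : {D | D ∈ Msets ∧ DenseIn Set.univ D} ⊆ Msets := fun D h => h.1
    obtain ⟨f, hf⟩ := (hcount.mono hsub).exists_eq_range hne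
    have hfm : ∀ m, f m ∈ Msets ∧ DenseIn Set.univ (f m) := by
      intro m
      have : f m ∈ {D | D ∈ Msets ∧ DenseIn Set.univ D} := hf ▸ Set.mem_range_self m
      exact this
    have key : ∀ (m : ℕ) (p : Cond), ∃ q, q ∈ f m ∧ Extends q p ∧
        ∀ x b, x.1 < m → p.1 x = none → q.1 x = some b → b = c x.1 x.2 :=
      fun m p => step_exists Msets hflip hproj c hmut m p (f m) (hfm m).1 (hfm m).2
    choose F hF1 hF2 hF3 using key
    let p : ℕ → Cond := fun m =>
      Nat.rec ⟨fun _ => none, by simp⟩ (fun m q => F m q) m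
    have hchain : ∀ m m', m ≤ m' → Extends (p m') (p m) := by
      intro m m' h
      induction h with
      | refl => exact extends_refl _
      | step h ih => exact extends_trans (hF2 _ _) ih
    set d : ℕ × ℕ → Bool := limitR (fun x => c x.1 x.2) p with hd
    have hag : ∀ m, Agrees d (p m) := fun m => limitR_agrees hchain m
    refine ⟨d, ?_, ?_⟩
    · intro D hD hdense
      have hmem : D ∈ Set.range f := hf ▸ (⟨hD, hdense⟩ : D ∈ {D | D ∈ Msets ∧ DenseIn Set.univ D})
      obtain ⟨m, hm⟩ := hmem
      refine ⟨p (m+1), ?_, hag (m+1)⟩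
      rw [← hm]
      exact hF1 m (p m)
    · intro n
      have hpers : ∀ x : ℕ × ℕ, (p (x.1+1)).1 x = none → ∀ j, x.1+1 ≤ j →
          (p j).1 x = none ∨ (p j).1 x = some (c x.1 x.2) := by
        intro x h0 j hj
        induction j, hj using Nat.le_induction with
        | base => exact Or.inl h0
        | succ j hj ih =>
          rcases ih with hnone | hsome
          · rcases hx : (p (j+1)).1 x with _ | b
            · exact Or.inl rfl
            · right
              have hlt : x.1 < j := Nat.lt_of_succ_le hj
              rw [hF3 j (p j) x b hlt hnone hx]
          · exact Or.inr (hchain j (j+1) (Nat.le_succ j) x _ hsome)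
      have hsubs : {k | d (n,k) ≠ c n k} ⊆ {k | (p (n+1)).1 (n,k) ≠ none} := by
        intro k hk
        simp only [Set.mem_setOf_eq] at hk ⊢
        intro h0
        by_cases hex : ∃ m b, (p m).1 (n,k) = some b
        · obtain ⟨m, b, hm⟩ := hex
          have hdb : d (n,k) = b := hag m (n,k) b hm
          have hbne : b ≠ c n k := fun hbc => hk (by rw [hdb, hbc])
          have hj := hpers (n,k) h0 (max m (n+1)) (le_max_right _ _)
          have hmj : (p (max m (n+1))).1 (n,k) = some b :=
            hchain m _ (le_max_left _ _) _ b hm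
          rcases hj with h | h
          · rw [hmj] at h; exact Option.some_ne_none _ h
          · rw [hmj] at h; exact hbne (Option.some.inj h)
        · push_neg at hex
          exact hk (limitR_eq (fun m b hb => hex m b hb))
      have hinj : Function.Injective (fun k : ℕ => ((n,k) : ℕ × ℕ)) := by
        intro a b h; simpa using h
      have hfin : {k | (p (n+1)).1 (n,k) ≠ none}.Finite :=
        Set.Finite.preimage hinj.injOn (p (n+1)).2
      exact hfin.subset hsubs
  · refine ⟨fun x => c x.1 x.2, ?_, ?_⟩
    · intro D hD hdense
      exact absurd ⟨D, hD, hdense⟩ hne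
    · intro n
      simp


end CohenTower
end
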